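/- Fix z ∈ ℝ and let z_π = z mod π ∈ [0, π). Then, as q → 1⁻ (with q ∈ (0,1)), the ratio ϑ₃(z,q) / [ √(π/log(1/q)) · ( exp(z_π²/log q) + exp((π − z_π)²/log q) ) ] tends to 1. -/

import Mathlib

open Filter Topology Real Complex

/-- The Jacobi theta function `ϑ₃(z,q) = ∑_{n ∈ ℤ} q^{n²} e^{2inz}`. -/
noncomputable def jacobiTheta3 (z q : ℝ) : ℂ :=
  ∑' n : ℤ, (q : ℂ) ^ (n ^ 2) * Complex.exp (2 * Complex.I * (n : ℂ) * (z : ℂ))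

/-!
Write `q = e^{-c}` with `c = log (1/q) → 0⁺`. Poisson summation turns `ϑ₃(z, q)` into
`√(π/c) · ∑ₙ e^{-(z + πn)²/c}`, a Gaussian wrapped around `ℝ/πℤ`, so `z` may be replaced by
`z_π ∈ [0, π)`. The terms `n = 0` and `n = -1` are the two exponentials of the statement. Since
`(a + πk)² ≥ a² + π²k` for `a ≥ 0` and `k ∈ ℕ`, the terms with `n ≥ 0` (resp. `n < 0`) are
dominated by a geometric series of ratio `e^{-π²/c}` starting at the first (resp. second) of them,
so the ratio lies between `1` and `1 / (1 - e^{-π²/c})`.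
-/

section HalfLatticeGaussian

variable {a t c s : ℝ}

lemma exp_neg_sq_add_mul_nat_div_le (ha : 0 ≤ a) (ht : 0 ≤ t) (hc : 0 < c) (k : ℕ) :
    Real.exp (-(a + t * k) ^ 2 / c) ≤ Real.exp (-a ^ 2 / c) * Real.exp (-t ^ 2 / c) ^ k := by
  rw [← Real.exp_nat_mul, ← Real.exp_add, Real.exp_le_exp, mul_div_assoc', ← add_div,
    div_le_div_iff_of_pos_right hc]
  have hk : (k : ℝ) ≤ (k : ℝ) ^ 2 := by exact_mod_cast Nat.le_self_pow two_ne_zero k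
  nlinarith [mul_nonneg (mul_nonneg ha ht) k.cast_nonneg,
    mul_le_mul_of_nonneg_left hk (sq_nonneg t)]

lemma exp_neg_div_lt_one (hs : 0 < s) (hc : 0 < c) : Real.exp (-s / c) < 1 := by
  rw [Real.exp_lt_one_iff, neg_div, neg_lt_zero]
  positivity

lemma summable_exp_neg_sq_add_mul_nat_div (ha : 0 ≤ a) (ht : 0 < t) (hc : 0 < c) :
    Summable fun k : ℕ => Real.exp (-(a + t * k) ^ 2 / c) :=
  .of_nonneg_of_le (fun _ => (Real.exp_pos _).le) (exp_neg_sq_add_mul_nat_div_le ha ht.le hc)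
    ((summable_geometric_of_lt_one (Real.exp_pos _).le
      (exp_neg_div_lt_one (by positivity) hc)).mul_left _)

lemma tsum_exp_neg_sq_add_mul_nat_div_le (ha : 0 ≤ a) (ht : 0 < t) (hc : 0 < c) :
    ∑' k : ℕ, Real.exp (-(a + t * k) ^ 2 / c) ≤
      Real.exp (-a ^ 2 / c) / (1 - Real.exp (-t ^ 2 / c)) := by
  have hgeom := (hasSum_geometric_of_lt_one (Real.exp_pos _).le
    (exp_neg_div_lt_one (sq_pos_of_pos ht) hc)).mul_left (Real.exp (-a ^ 2 / c))
  calc ∑' k : ℕ, Real.exp (-(a + t * k) ^ 2 / c)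
      ≤ ∑' k : ℕ, Real.exp (-a ^ 2 / c) * Real.exp (-t ^ 2 / c) ^ k :=
        (summable_exp_neg_sq_add_mul_nat_div ha ht hc).tsum_le_tsum
          (exp_neg_sq_add_mul_nat_div_le ha ht.le hc) hgeom.summable
    _ = _ := hgeom.tsum_eq.trans (div_eq_mul_inv _ _).symm

lemma exp_neg_sq_div_le_tsum (ha : 0 ≤ a) (ht : 0 < t) (hc : 0 < c) :
    Real.exp (-a ^ 2 / c) ≤ ∑' k : ℕ, Real.exp (-(a + t * k) ^ 2 / c) := by
  simpa using (summable_exp_neg_sq_add_mul_nat_div ha ht hc).le_tsum 0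
    fun _ _ => (Real.exp_pos _).le

end HalfLatticeGaussian

noncomputable def wrappedGaussian (c x : ℝ) : ℝ :=
  ∑' n : ℤ, Real.exp (-(x + π * n) ^ 2 / c)

section WrappedGaussian

variable {c x : ℝ}

lemma wrappedGaussian_add_pi_mul_int (c x : ℝ) (m : ℤ) :
    wrappedGaussian c (x + π * m) = wrappedGaussian c x := by
  refine (tsum_congr fun n => ?_).trans
    ((Equiv.addRight m).tsum_eq fun n : ℤ => Real.exp (-(x + π * n) ^ 2 / c))
  push_cast [Equiv.coe_addRight]
  ring_nf

lemma wrappedGaussian_eq_tsum_add_tsum (hx₀ : 0 ≤ x) (hxπ : x ≤ π) (hc : 0 < c) :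
    wrappedGaussian c x = ∑' k : ℕ, Real.exp (-(x + π * k) ^ 2 / c) +
      ∑' k : ℕ, Real.exp (-((π - x) + π * k) ^ 2 / c) := by
  have hneg (k : ℕ) : (x + π * ((-(k + 1) : ℤ) : ℝ)) ^ 2 = ((π - x) + π * k) ^ 2 := by
    push_cast; ring
  simp only [wrappedGaussian, ← hneg]
  refine tsum_of_nat_of_neg_add_one (f := fun n : ℤ => Real.exp (-(x + π * n) ^ 2 / c))
    (by exact_mod_cast summable_exp_neg_sq_add_mul_nat_div hx₀ pi_pos hc) ?_
  simpa only [hneg] using summable_exp_neg_sq_add_mul_nat_div (sub_nonneg.2 hxπ) pi_pos hc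

lemma le_wrappedGaussian (hx₀ : 0 ≤ x) (hxπ : x ≤ π) (hc : 0 < c) :
    Real.exp (-x ^ 2 / c) + Real.exp (-(π - x) ^ 2 / c) ≤ wrappedGaussian c x := by
  rw [wrappedGaussian_eq_tsum_add_tsum hx₀ hxπ hc]
  exact add_le_add (exp_neg_sq_div_le_tsum hx₀ pi_pos hc)
    (exp_neg_sq_div_le_tsum (sub_nonneg.2 hxπ) pi_pos hc)

lemma wrappedGaussian_le (hx₀ : 0 ≤ x) (hxπ : x ≤ π) (hc : 0 < c) :
    wrappedGaussian c x ≤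
      (Real.exp (-x ^ 2 / c) + Real.exp (-(π - x) ^ 2 / c)) / (1 - Real.exp (-π ^ 2 / c)) := by
  rw [wrappedGaussian_eq_tsum_add_tsum hx₀ hxπ hc, add_div]
  exact add_le_add (tsum_exp_neg_sq_add_mul_nat_div_le hx₀ pi_pos hc)
    (tsum_exp_neg_sq_add_mul_nat_div_le (sub_nonneg.2 hxπ) pi_pos hc)

lemma tendsto_exp_neg_div_nhdsGT_zero (hs : 0 < s) :
    Tendsto (fun c => Real.exp (-s / c)) (𝓝[>] 0) (𝓝 0) := by
  have h : Tendsto (fun c => -s / c) (𝓝[>] 0) atBot := by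
    simpa only [div_eq_mul_inv] using
      tendsto_inv_nhdsGT_zero.const_mul_atTop_of_neg (neg_neg_of_pos hs)
  exact Real.tendsto_exp_atBot.comp h

lemma tendsto_wrappedGaussian_div (hx₀ : 0 ≤ x) (hxπ : x ≤ π) :
    Tendsto (fun c => wrappedGaussian c x / (Real.exp (-x ^ 2 / c) + Real.exp (-(π - x) ^ 2 / c)))
      (𝓝[>] 0) (𝓝 1) := by
  have hupper : Tendsto (fun c => 1 / (1 - Real.exp (-π ^ 2 / c))) (𝓝[>] 0) (𝓝 1) := by
    simpa using ((tendsto_exp_neg_div_nhdsGT_zero (pow_pos pi_pos 2)).const_sub 1).inv₀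
      (by norm_num)
  refine tendsto_of_tendsto_of_tendsto_of_le_of_le' tendsto_const_nhds hupper ?_ ?_ <;>
    filter_upwards [self_mem_nhdsWithin] with c (hc : 0 < c)
  · rw [one_le_div (by positivity)]
    exact le_wrappedGaussian hx₀ hxπ hc
  · rw [div_le_iff₀ (by positivity), one_div_mul_eq_div]
    exact wrappedGaussian_le hx₀ hxπ hc

end WrappedGaussian

lemma jacobiTheta3_eq_sqrt_mul_wrappedGaussian (z : ℝ) {q : ℝ} (hq : q ∈ Set.Ioo 0 1) :
    jacobiTheta3 z q =
      ((√(π / Real.log (1 / q)) * wrappedGaussian (Real.log (1 / q)) z : ℝ) : ℂ) := by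
  set c := Real.log (1 / q) with hc_def
  have hc : 0 < c := Real.log_pos ((one_lt_div hq.1).2 hq.2)
  have hq_eq : (q : ℂ) = cexp (-c) := by
    rw [← Complex.ofReal_neg, ← Complex.ofReal_exp, hc_def, one_div, Real.log_inv, neg_neg,
      Real.exp_log hq.1]
  have hca : 0 < ((c / π : ℝ) : ℂ).re := by rw [Complex.ofReal_re]; positivity
  have hsqrt : 1 / ((c / π : ℝ) : ℂ) ^ (1 / 2 : ℂ) = (√(π / c) : ℂ) := by
    rw [← inv_div c, Real.sqrt_inv, Complex.ofReal_inv, one_div, Real.sqrt_eq_rpow,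
      Complex.ofReal_cpow (by positivity)]
    norm_num
  calc jacobiTheta3 z q
      = ∑' n : ℤ, cexp (-π * (c / π : ℝ) * n ^ 2 + 2 * π * (I * z / π) * n) := by
        refine tsum_congr fun n => ?_
        rw [hq_eq, ← Complex.exp_int_mul, ← Complex.exp_add]
        congr 1
        push_cast
        field_simp
    _ = (√(π / c) : ℂ) * ∑' n : ℤ, cexp (-π / (c / π : ℝ) * (n + I * (I * z / π)) ^ 2) := by
        rw [Complex.tsum_exp_neg_quadratic hca, hsqrt]
    _ = (√(π / c) : ℂ) * ∑' n : ℤ, ((Real.exp (-(z + π * n) ^ 2 / c) : ℝ) : ℂ) := by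
        have hI (w : ℂ) : w + I * (I * z / π) = w - z / π := by
          rw [← mul_div_assoc, ← mul_assoc, I_mul_I]; ring
        rw [← (Equiv.neg ℤ).tsum_eq]
        congr 1
        refine tsum_congr fun n => ?_
        rw [hI, Equiv.neg_apply, Complex.ofReal_exp]
        congr 1
        push_cast
        field_simp
        ring
    _ = _ := by rw [wrappedGaussian, Complex.ofReal_mul, Complex.ofReal_tsum]

lemma tendsto_log_one_div_nhdsLT_one :
    Tendsto (fun q : ℝ => Real.log (1 / q)) (𝓝[<] 1) (𝓝[>] 0) := by
  refine tendsto_nhdsWithin_of_tendsto_nhds_of_eventually_within _ ?_ ?_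
  · simpa using ((Real.continuousAt_log one_ne_zero).tendsto.neg).mono_left nhdsWithin_le_nhds
  · filter_upwards [Ioo_mem_nhdsLT zero_lt_one] with q hq
    exact Real.log_pos ((one_lt_div hq.1).2 hq.2)

/-- Asymptotic form of `ϑ₃` near `q = 1`: with `z_π = z mod π`,
the ratio `ϑ₃(z,q) / (√(π/log(1/q)) (e^{z_π²/log q} + e^{(π-z_π)²/log q}))` tends
to `1` as `q → 1⁻`. -/
theorem jacobiTheta3_asymptotic (z : ℝ) (zpi : ℝ)
    (hzpi : zpi = z - Real.pi * (⌊z / Real.pi⌋ : ℤ)) :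
    Tendsto (fun q : ℝ =>
        jacobiTheta3 z q /
          ((Real.sqrt (Real.pi / Real.log (1 / q)) *
              (Real.exp (zpi ^ 2 / Real.log q) +
                Real.exp ((Real.pi - zpi) ^ 2 / Real.log q)) : ℝ) : ℂ))
      (𝓝[Set.Ioo (0 : ℝ) 1] 1) (𝓝 1) := by
  have hzpi_eq : zpi = π * Int.fract (z / π) := by
    rw [hzpi, Int.fract, mul_sub, mul_div_cancel₀ _ pi_ne_zero]
  have hzpi₀ : 0 ≤ zpi := hzpi_eq ▸ mul_nonneg pi_pos.le (Int.fract_nonneg _)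
  have hzpiπ : zpi ≤ π := hzpi_eq ▸ mul_le_of_le_one_right pi_pos.le (Int.fract_lt_one _).le
  have hlim := (tendsto_wrappedGaussian_div hzpi₀ hzpiπ).comp
    (tendsto_log_one_div_nhdsLT_one.mono_left
      (nhdsWithin_mono _ (Set.Ioo_subset_Iio_self (a := 0))))
  refine ((Complex.continuous_ofReal.tendsto 1).comp hlim).congr' ?_
  filter_upwards [self_mem_nhdsWithin] with q hq
  have hlog : Real.log q = -Real.log (1 / q) := by rw [one_div, Real.log_inv, neg_neg]
  have hsqrt : √(π / Real.log (1 / q)) ≠ 0 :=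
    (Real.sqrt_pos.2 (div_pos pi_pos (Real.log_pos ((one_lt_div hq.1).2 hq.2)))).ne'
  rw [Function.comp_apply, Function.comp_apply, jacobiTheta3_eq_sqrt_mul_wrappedGaussian z hq,
    show z = zpi + π * ⌊z / π⌋ by linarith, wrappedGaussian_add_pi_mul_int, hlog,
    div_neg, div_neg, ← neg_div, ← neg_div, ← Complex.ofReal_div, mul_div_mul_left _ _ hsqrt]
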